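/- A graph is 2-edge bottlenecked if and only if any two distinct cycles intersect in at most one vertex (i.e., the graph is a cactus). -/

import Mathlib

open SimpleGraph

variable {V : Type}

/-- A set of vertices is connected if the induced subgraph is connected. -/
def ConnSet (G : SimpleGraph V) (X : Set V) : Prop := (G.induce X).Connected

/-- `G` is `n`-edge bottlenecked: any two disjoint connected vertex sets `X,Y`
admit a set of at most `n` edges meeting every `X,Y` path. -/
def EdgeBottlenecked (G : SimpleGraph V) (n : ℕ) : Prop :=
  ∀ X Y : Set V, Disjoint X Y → ConnSet G X → ConnSet G Y →
    ∃ S : Finset (Sym2 V), S.card ≤ n ∧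
      ∀ ⦃x y : V⦄ (p : G.Walk x y), x ∈ X → y ∈ Y → p.IsPath → ∃ e ∈ S, e ∈ p.edges

/-- `G` is `n`-point bottlenecked: any two disjoint connected vertex sets `X,Y`
admit a set of at most `n` vertices meeting every `X,Y` path. -/
def PointBottlenecked (G : SimpleGraph V) (n : ℕ) : Prop :=
  ∀ X Y : Set V, Disjoint X Y → ConnSet G X → ConnSet G Y →
    ∃ S : Finset V, S.card ≤ n ∧
      ∀ ⦃x y : V⦄ (p : G.Walk x y), x ∈ X → y ∈ Y → p.IsPath → ∃ v ∈ S, v ∈ p.support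

/-- An `n`-ladder: two disjoint connected poles `X,Y` and `n` rungs, i.e. `X,Y`
paths that are pairwise disjoint outside of `X ∪ Y`. -/
structure Ladder (G : SimpleGraph V) (n : ℕ) where
  X : Set V
  Y : Set V
  disj : Disjoint X Y
  connX : ConnSet G X
  connY : ConnSet G Y
  a : Fin n → V
  b : Fin n → V
  ha : ∀ i, a i ∈ X
  hb : ∀ i, b i ∈ Y
  p : (i : Fin n) → G.Walk (a i) (b i)
  isPath : ∀ i, (p i).IsPath
  rungsDisj : ∀ i j, i ≠ j → ∀ v, v ∈ (p i).support → v ∈ (p j).support → v ∈ X ∪ Y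

/-- `G` contains the dipole `D_k` as a minor: equivalently, `G` contains a `k`-ladder. -/
def HasDipoleMinor (G : SimpleGraph V) (k : ℕ) : Prop := Nonempty (Ladder G k)

/-- Two vertex sets are `M`-disjoint if every pair of points (one from each) is at
graph distance at least `M`. -/
def MDisjoint (G : SimpleGraph V) (M : ℕ) (X Y : Set V) : Prop :=
  ∀ x ∈ X, ∀ y ∈ Y, M ≤ G.dist x y

/-- `G` is `M`-fat `n`-bottlenecked: any two connected `M`-disjoint sets `X,Y` admit
at most `n` vertices (outside `X ∪ Y`) whose open `M`-neighborhood meets every `X,Y` path. -/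
def FatBottlenecked (G : SimpleGraph V) (M n : ℕ) : Prop :=
  ∀ X Y : Set V, ConnSet G X → ConnSet G Y → MDisjoint G M X Y →
    ∃ S : Finset V, S.card ≤ n ∧ (∀ s ∈ S, s ∉ X ∪ Y) ∧
      ∀ ⦃x y : V⦄ (p : G.Walk x y), x ∈ X → y ∈ Y → p.IsPath →
        ∃ v ∈ p.support, ∃ s ∈ S, G.dist v s < M

/-- An `M`-fat `n`-ladder: an `n`-ladder whose poles are `M`-disjoint and whose
rungs are pairwise `M`-disjoint. -/
structure FatLadder (G : SimpleGraph V) (M n : ℕ) extends Ladder G n where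
  polesFat : MDisjoint G M X Y
  rungsFat : ∀ i j, i ≠ j → ∀ u v, u ∈ (p i).support → v ∈ (p j).support → M ≤ G.dist u v

/-- `H` is a minor of `G`: branch sets in `G` (nonempty, connected, pairwise disjoint)
realize the vertices of `H`, and every edge of `H` is realized by an edge of `G`. -/
def IsMinor {W : Type} (G : SimpleGraph V) (H : SimpleGraph W) : Prop :=
  ∃ B : W → Set V, (∀ w, (B w).Nonempty) ∧ (∀ w, ConnSet G (B w)) ∧
    (∀ w w', w ≠ w' → Disjoint (B w) (B w')) ∧
    (∀ ⦃w w'⦄, H.Adj w w' → ∃ u ∈ B w, ∃ v ∈ B w', G.Adj u v)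

/-- `H` is an `M`-fat minor of `G`: a minor whose branch sets are pairwise `M`-disjoint
except where incident (adjacent) in `H`. -/
def IsFatMinor (G : SimpleGraph V) (M : ℕ) {W : Type} (H : SimpleGraph W) : Prop :=
  ∃ B : W → Set V, (∀ w, (B w).Nonempty) ∧ (∀ w, ConnSet G (B w)) ∧
    (∀ w w', w ≠ w' → Disjoint (B w) (B w')) ∧
    (∀ w w', w ≠ w' → ¬ H.Adj w w' → MDisjoint G M (B w) (B w')) ∧
    (∀ ⦃w w'⦄, H.Adj w w' → ∃ u ∈ B w, ∃ v ∈ B w', G.Adj u v)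

/-!
If two distinct cycles `C`, `C'` share two vertices `p ≠ q`, some edge of `C'` outside `C` lies on
one of the two `p`–`q` arcs of `C'`, and that arc contains an ear of `C`: a walk between two
distinct vertices `a`, `b` of `C` using no edge of `C`. With the two `a`–`b` arcs of `C` this gives
three edge-disjoint `a`–`b` walks, which no two edges separate.

Conversely, let `A` be the set of vertices reachable from `X` without entering `Y`. Every `X`–`Y`
path leaves `A` through an edge between `A` and `Y`. In a cactus there are at most two such edges:
any two of them close up, through `A` and through `Y`, a cycle containing no other `A`–`Y` edge, so
three of them `e₁, e₂, e₃` would give distinct cycles through `e₁, e₂` and through `e₁, e₃`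
sharing both ends of `e₁`.
-/

theorem connSet_singleton (G : SimpleGraph V) (a : V) : ConnSet G {a} :=
  ⟨Preconnected.of_subsingleton⟩

theorem ConnSet.exists_isPath {G : SimpleGraph V} {X : Set V} (hX : ConnSet G X) {a b : V}
    (ha : a ∈ X) (hb : b ∈ X) : ∃ P : G.Walk a b, P.IsPath ∧ ∀ z ∈ P.support, z ∈ X := by
  classical
  obtain ⟨w⟩ := Connected.preconnected hX ⟨a, ha⟩ ⟨b, hb⟩
  refine ⟨w.bypass.map (Embedding.induce X).toHom, w.bypass_isPath.map Subtype.val_injective, ?_⟩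
  intro z hz
  erw [Walk.support_map, List.mem_map] at hz
  obtain ⟨z, -, rfl⟩ := hz
  exact z.2

namespace SimpleGraph

variable {G : SimpleGraph V}

def IsCactus (G : SimpleGraph V) : Prop :=
  ∀ (u v : V) (c₁ : G.Walk u u) (c₂ : G.Walk v v), c₁.IsCycle → c₂.IsCycle →
    c₁.toSubgraph.edgeSet ≠ c₂.toSubgraph.edgeSet →
    (c₁.toSubgraph ⊓ c₂.toSubgraph).verts.Subsingleton

namespace Walk

theorem IsCycle.exists_two_paths_of_mem_support {u a b : V} {c : G.Walk u u} (hc : c.IsCycle)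
    (ha : a ∈ c.support) (hb : b ∈ c.support) (hab : a ≠ b) :
    ∃ P Q : G.Walk a b, P.IsPath ∧ Q.IsPath ∧ P.edges.Disjoint Q.edges ∧
      ∀ e, e ∈ c.edges ↔ e ∈ P.edges ∨ e ∈ Q.edges := by
  classical
  have hc' : (c.rotate a ha).IsCycle := hc.rotate ha
  have hb' : b ∈ (c.rotate a ha).support := (mem_support_rotate_iff ..).2 hb
  have hsplit := take_spec _ hb'
  have hdrop : ((c.rotate a ha).dropUntil b hb').IsPath :=
    IsCycle.isPath_of_append_right (not_nil_of_ne hab) (hsplit ▸ hc')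
  have hedges := congrArg edges hsplit
  rw [edges_append] at hedges
  refine ⟨_, _, hc'.isPath_takeUntil hb', hdrop.reverse, ?_, fun e => ?_⟩
  · rw [edges_reverse, List.disjoint_reverse_right]
    exact hc'.isTrail.disjoint_edges_takeUntil_dropUntil hb'
  · rw [← (rotate_edges c a ha).mem_iff, ← hedges, edges_reverse, List.mem_append, List.mem_reverse]

theorem exists_walk_to_verts_avoiding_edgeSet (H : G.Subgraph) {s t : V} (w : G.Walk s t)
    (hs : s ∉ H.verts) (ht : t ∈ H.verts) :
    ∃ b ∈ H.verts, b ∈ w.support ∧ ∃ R : G.Walk s b, ∀ e ∈ R.edges, e ∉ H.edgeSet := by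
  induction w with
  | nil => exact absurd ht hs
  | @cons s s₁ t h w ih =>
    have hfirst : s(s, s₁) ∉ H.edgeSet := fun he => hs (H.edge_vert he)
    by_cases hs₁ : s₁ ∈ H.verts
    · refine ⟨s₁, hs₁, by simp, cons h nil, by simpa using hfirst⟩
    · obtain ⟨b, hb, hbw, R, hR⟩ := ih hs₁ ht
      refine ⟨b, hb, by simp [hbw], cons h R, ?_⟩
      simp only [edges_cons, List.mem_cons, forall_eq_or_imp]
      exact ⟨fun he => hs₁ (H.edge_vert (H.adj_symm he)), hR⟩

theorem IsPath.exists_ear (H : G.Subgraph) {s t : V} {w : G.Walk s t} (hw : w.IsPath)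
    (hs : s ∈ H.verts) (ht : t ∈ H.verts) (he : ∃ e ∈ w.edges, e ∉ H.edgeSet) :
    ∃ a ∈ H.verts, ∃ b ∈ H.verts, a ≠ b ∧ ∃ R : G.Walk a b, ∀ e ∈ R.edges, e ∉ H.edgeSet := by
  induction w with
  | nil => simp at he
  | @cons s s₁ t h w ih =>
    rw [cons_isPath_iff] at hw
    by_cases hs₁ : s₁ ∈ H.verts
    · by_cases hfirst : s(s, s₁) ∈ H.edgeSet
      · obtain ⟨e, he, heH⟩ := he
        rw [edges_cons, List.mem_cons] at he
        rcases he with rfl | he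
        · exact absurd hfirst heH
        · exact ih hw.1 hs₁ ht ⟨e, he, heH⟩
      · exact ⟨s, hs, s₁, hs₁, h.ne, cons h Walk.nil, by simpa using hfirst⟩
    · obtain ⟨b, hb, hbw, R, hR⟩ := exists_walk_to_verts_avoiding_edgeSet H w hs₁ ht
      refine ⟨s, hs, b, hb, fun hsb => hw.2 (hsb ▸ hbw), cons h R, ?_⟩
      simp only [edges_cons, List.mem_cons, forall_eq_or_imp]
      exact ⟨fun he => hs₁ (H.edge_vert (H.adj_symm he)), hR⟩

end Walk

def crossingEdges (G : SimpleGraph V) (A B : Set V) : Set (Sym2 V) :=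
  {e ∈ G.edgeSet | ∃ a ∈ A, ∃ b ∈ B, e = s(a, b)}

theorem exists_mem_crossingEdges_of_walk {A Y : Set V} (hAY : Disjoint A Y)
    (hA : ∀ a ∈ A, ∀ b, G.Adj a b → b ∉ Y → b ∈ A) {x y : V} (p : G.Walk x y) (hx : x ∈ A)
    (hy : y ∈ Y) : ∃ e ∈ G.crossingEdges A Y, e ∈ p.edges := by
  obtain ⟨d, hd, hdA, hdA'⟩ := p.exists_boundary_dart A hx (hAY.notMem_of_mem_right hy)
  have hdY : d.snd ∈ Y := by_contra fun h => hdA' (hA _ hdA _ d.adj h)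
  exact ⟨d.edge, ⟨d.edge_mem, d.fst, hdA, d.snd, hdY, rfl⟩,
    p.edges_eq_map_darts ▸ List.mem_map_of_mem hd⟩

open Walk in
theorem exists_isCycle_of_mem_crossingEdges {A Y : Set V} (hAY : Disjoint A Y)
    (hA : ConnSet G A) (hY : ConnSet G Y) {a y : V} (ha : a ∈ A) (hy : y ∈ Y) (hay : G.Adj a y)
    {e : Sym2 V} (he : e ∈ G.crossingEdges A Y) (hne : e ≠ s(a, y)) :
    ∃ c : G.Walk a a, c.IsCycle ∧ y ∈ c.support ∧ e ∈ c.edges ∧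
      ∀ f ∈ c.edges, f ∈ G.crossingEdges A Y → f = s(a, y) ∨ f = e := by
  obtain ⟨he, a', ha', y', hy', rfl⟩ := he
  obtain ⟨P, hP, hPY⟩ := hY.exists_isPath hy hy'
  obtain ⟨Q, hQ, hQA⟩ := hA.exists_isPath ha' ha
  have hPA : ∀ z ∈ P.support, z ∉ A := fun z hz hzA => hAY.notMem_of_mem_left hzA (hPY z hz)
  have hQY : ∀ z ∈ Q.support, z ∉ Y := fun z hz hzY => hAY.notMem_of_mem_left (hQA z hz) hzY
  refine ⟨cons hay (P.append (cons (G.mem_edgeSet.1 he).symm Q)), ?_, by simp, by simp, ?_⟩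
  · rw [cons_isCycle_iff, isPath_def, support_append, support_cons, List.tail_cons]
    refine ⟨hP.support_nodup.append hQ.support_nodup fun z hzP hzQ => hPA z hzP (hQA z hzQ), ?_⟩
    simp only [edges_append, edges_cons, List.mem_append, List.mem_cons, not_or]
    refine ⟨fun h => hPA a (P.fst_mem_support_of_mem_edges h) ha, fun h => hne ?_,
      fun h => hQY y (Q.snd_mem_support_of_mem_edges h) hy⟩
    rw [h, Sym2.eq_swap]
  · rintro f hf ⟨-, a'', ha'', y'', hy'', rfl⟩
    simp only [edges_cons, edges_append, List.mem_cons, List.mem_append] at hf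
    rcases hf with hf | hf | hf | hf
    · exact Or.inl hf
    · exact absurd ha'' (hPA a'' (P.fst_mem_support_of_mem_edges hf))
    · exact Or.inr (hf.trans Sym2.eq_swap)
    · exact absurd hy'' (hQY y'' (Q.snd_mem_support_of_mem_edges hf))

theorem IsCactus.encard_crossingEdges_le_two (hG : G.IsCactus) {A Y : Set V}
    (hAY : Disjoint A Y) (hA : ConnSet G A) (hY : ConnSet G Y) :
    (G.crossingEdges A Y).encard ≤ 2 := by
  by_contra! h
  obtain ⟨T, hT, hT3⟩ := Set.exists_subset_encard_eq (Order.add_one_le_of_lt h)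
  obtain ⟨e₁, e₂, e₃, h₁₂, h₁₃, h₂₃, rfl⟩ := Set.encard_eq_three.1 hT3
  obtain ⟨he₁, a, ha, y, hy, rfl⟩ := hT (show e₁ ∈ _ by simp)
  have hay := G.mem_edgeSet.1 he₁
  obtain ⟨c₂, hc₂, hyc₂, he₂c₂, -⟩ :=
    exists_isCycle_of_mem_crossingEdges hAY hA hY ha hy hay (hT (by simp)) h₁₂.symm
  obtain ⟨c₃, hc₃, hyc₃, -, hc₃cross⟩ :=
    exists_isCycle_of_mem_crossingEdges hAY hA hY ha hy hay (hT (by simp)) h₁₃.symm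
  have hne : c₂.toSubgraph.edgeSet ≠ c₃.toSubgraph.edgeSet := by
    intro h
    have he₂c₃ : e₂ ∈ c₃.toSubgraph.edgeSet := h ▸ by simpa using he₂c₂
    rw [Walk.edgeSet_toSubgraph, Walk.mem_edgeSet] at he₂c₃
    rcases hc₃cross e₂ he₂c₃ (hT (by simp)) with h' | h'
    exacts [h₁₂ h'.symm, h₂₃ h']
  have := hG a a c₂ c₃ hc₂ hc₃ hne (show a ∈ _ by simp) (show y ∈ _ by simp [hyc₂, hyc₃])
  exact hAY.notMem_of_mem_left ha (this ▸ hy)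

def reachableAvoiding (G : SimpleGraph V) (X Y : Set V) : Set V :=
  {v | ∃ x ∈ X, ∃ w : G.Walk x v, ∀ z ∈ w.support, z ∉ Y}

section reachableAvoiding

variable {X Y : Set V}

theorem subset_reachableAvoiding (hXY : Disjoint X Y) : X ⊆ G.reachableAvoiding X Y :=
  fun x hx => ⟨x, hx, .nil, by simpa using hXY.notMem_of_mem_left hx⟩

theorem disjoint_reachableAvoiding : Disjoint (G.reachableAvoiding X Y) Y :=
  Set.disjoint_left.2 fun _ ⟨_, _, w, hw⟩ => hw _ w.end_mem_support

theorem mem_reachableAvoiding_of_adj {a b : V} (ha : a ∈ G.reachableAvoiding X Y)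
    (hab : G.Adj a b) (hb : b ∉ Y) : b ∈ G.reachableAvoiding X Y := by
  obtain ⟨x, hx, w, hw⟩ := ha
  refine ⟨x, hx, w.concat hab, fun z hz => ?_⟩
  rw [Walk.support_concat, List.mem_append, List.mem_singleton] at hz
  rcases hz with hz | rfl
  exacts [hw z hz, hb]

theorem Walk.support_subset_reachableAvoiding {x v : V} (hx : x ∈ X) (w : G.Walk x v)
    (hw : ∀ z ∈ w.support, z ∉ Y) : ∀ z ∈ w.support, z ∈ G.reachableAvoiding X Y := by
  classical
  exact fun z hz => ⟨x, hx, w.takeUntil z hz,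
    fun t ht => hw t (w.support_takeUntil_subset_support hz ht)⟩

theorem connSet_reachableAvoiding (hXY : Disjoint X Y) (hX : ConnSet G X) :
    ConnSet G (G.reachableAvoiding X Y) := by
  obtain ⟨⟨x₀, hx₀⟩⟩ := Connected.nonempty hX
  refine G.induce_connected_of_patches x₀ (subset_reachableAvoiding hXY hx₀) ?_
  rintro v ⟨x, hx, w, hw⟩
  refine ⟨X ∪ {z | z ∈ w.support}, Set.union_subset (subset_reachableAvoiding hXY)
    (w.support_subset_reachableAvoiding hx hw), .inl hx₀, .inr w.end_mem_support, ?_⟩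
  exact (induce_union_connected (Connected.preconnected hX) w.connected_induce_support.preconnected
    ⟨x, hx, w.start_mem_support⟩).preconnected _ _

end reachableAvoiding

theorem IsCactus.edgeBottlenecked (hG : G.IsCactus) : EdgeBottlenecked G 2 := by
  intro X Y hXY hX hY
  have hAY : Disjoint (G.reachableAvoiding X Y) Y := disjoint_reachableAvoiding
  have hle := hG.encard_crossingEdges_le_two hAY (connSet_reachableAvoiding hXY hX) hY
  have hfin := Set.finite_of_encard_le_coe hle
  refine ⟨hfin.toFinset, by exact_mod_cast hfin.encard_eq_coe_toFinset_card ▸ hle,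
    fun x y p hx hy _ => ?_⟩
  obtain ⟨e, he, hep⟩ := exists_mem_crossingEdges_of_walk hAY
    (fun a ha b hab hb => mem_reachableAvoiding_of_adj ha hab hb) p
    (subset_reachableAvoiding hXY hx) hy
  exact ⟨e, hfin.mem_toFinset.2 he, hep⟩

end SimpleGraph

theorem EdgeBottlenecked.eq_of_pairwise_disjoint_edges {G : SimpleGraph V} {n : ℕ} {a b : V}
    (hB : EdgeBottlenecked G n) (P : Fin (n + 1) → G.Walk a b)
    (hP : Pairwise fun i j => (P i).edges.Disjoint (P j).edges) : a = b := by
  classical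
  by_contra hab
  obtain ⟨S, hS, hhit⟩ := hB {a} {b} (Set.disjoint_singleton.2 hab) (connSet_singleton G a)
    (connSet_singleton G b)
  choose e heS hePe using fun i => hhit (P i).bypass rfl rfl (P i).bypass_isPath
  obtain ⟨i, -, j, -, hij, heij⟩ := Finset.exists_ne_map_eq_of_card_lt_of_maps_to
    (s := Finset.univ) (by simpa using Nat.lt_succ_of_le hS) (fun i _ => heS i)
  exact hP hij ((P i).edges_bypass_subset_edges (hePe i))
    (heij ▸ (P j).edges_bypass_subset_edges (hePe j))

theorem EdgeBottlenecked.mem_edges_of_isCycle {G : SimpleGraph V} (hB : EdgeBottlenecked G 2)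
    {u v p q : V} {c₁ : G.Walk u u} {c₂ : G.Walk v v} (hc₁ : c₁.IsCycle) (hc₂ : c₂.IsCycle)
    (hp₁ : p ∈ c₁.support) (hq₁ : q ∈ c₁.support) (hp₂ : p ∈ c₂.support)
    (hq₂ : q ∈ c₂.support) (hpq : p ≠ q) {e : Sym2 V} (he : e ∈ c₂.edges) : e ∈ c₁.edges := by
  by_contra he₁
  have no_ear (Q : G.Walk p q) (hQ : Q.IsPath) (heQ : e ∈ Q.edges) : False := by
    obtain ⟨a, ha, b, hb, hab, R, hR⟩ :=
      hQ.exists_ear c₁.toSubgraph (by simpa) (by simpa) ⟨e, heQ, by simpa⟩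
    obtain ⟨P₁, P₂, -, -, hP, hc₁P⟩ :=
      hc₁.exists_two_paths_of_mem_support (by simpa using ha) (by simpa using hb) hab
    have hP₁R : P₁.edges.Disjoint R.edges := fun f hf hfR =>
      hR f hfR (by simpa using (hc₁P f).2 (Or.inl hf))
    have hP₂R : P₂.edges.Disjoint R.edges := fun f hf hfR =>
      hR f hfR (by simpa using (hc₁P f).2 (Or.inr hf))
    refine hab (hB.eq_of_pairwise_disjoint_edges ![P₁, P₂, R] ?_)
    intro i j hij
    fin_cases i <;> fin_cases j <;> simp_all [List.disjoint_comm]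
  obtain ⟨Q₁, Q₂, hQ₁, hQ₂, -, hc₂Q⟩ := hc₂.exists_two_paths_of_mem_support hp₂ hq₂ hpq
  rcases (hc₂Q e).1 he with h | h
  exacts [no_ear Q₁ hQ₁ h, no_ear Q₂ hQ₂ h]

theorem EdgeBottlenecked.isCactus {G : SimpleGraph V} (hB : EdgeBottlenecked G 2) :
    G.IsCactus := by
  intro u v c₁ c₂ hc₁ hc₂ hne p hp q hq
  by_contra hpq
  simp only [Subgraph.verts_inf, Set.mem_inter_iff, Walk.mem_verts_toSubgraph] at hp hq
  refine hne (Set.ext fun e => ?_)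
  simp only [Walk.edgeSet_toSubgraph, Walk.mem_edgeSet]
  exact ⟨hB.mem_edges_of_isCycle hc₂ hc₁ hp.2 hq.2 hp.1 hq.1 hpq,
    hB.mem_edges_of_isCycle hc₁ hc₂ hp.1 hq.1 hp.2 hq.2 hpq⟩

/-- A graph is `2`-edge bottlenecked iff any two distinct cycles intersect in
at most one vertex (i.e. the graph is a cactus). -/
theorem twoBottlenecked_iff_cactus (G : SimpleGraph V) :
    EdgeBottlenecked G 2 ↔
      ∀ (u v : V) (c₁ : G.Walk u u) (c₂ : G.Walk v v), c₁.IsCycle → c₂.IsCycle →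
        c₁.toSubgraph.edgeSet ≠ c₂.toSubgraph.edgeSet →
        (c₁.toSubgraph ⊓ c₂.toSubgraph).verts.Subsingleton :=
  ⟨EdgeBottlenecked.isCactus, IsCactus.edgeBottlenecked⟩
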